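/- arXiv:1805.10487 — 2 statements merged into one kernel-verified Lean document; each statement's English description precedes it below -/
import Mathlib

section
/- Bias of the natural gradient at the barycenter: Let ε ∈ (0,1), f(r) = log((1+r)/(1−r)), p = (1−√((2−ε)ε))/(1−ε), η > 0, a = η·(√(1−p²)/2)·f(p), b = η·(√(1−p²)/2)·f(1−ε), R_l = p − a, and R_r = p − a + b. Assume R_l, R_r ∈ (−1,1). Then the hyperbolic distance d(p, R_r) is strictly greater than d(p, R_l), where d(x,y) = |f(x) − f(y)|. -/
open Set

/-- Hyperbolic distance from the origin in the 1-dim Poincaré disk. -/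
noncomputable def fdist (r : ℝ) : ℝ := Real.log ((1 + r) / (1 - r))

/-- Hyperbolic distance between two points of the 1-dim Poincaré disk. -/
noncomputable def hdist1 (x y : ℝ) : ℝ := |fdist x - fdist y|

/-!
Writing `g(p) = 2p / (1 + p²)` for the hyperbolic doubling map, `(1 + g p) / (1 - g p)` is the
square of `(1 + p) / (1 - p)`, so `fdist (g p) = 2 fdist p`. The barycenter `p` of `{0, 1 - ε}`
satisfies `g p = 1 - ε`, which turns `b` into `2a`: both updates then move `p` by the same
Euclidean amount `a`, once towards the origin and once away from it. Away from the origin the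
same Euclidean step covers a larger hyperbolic distance, because
`(1 + p - a)(1 + p + a) / ((1 - p + a)(1 - p - a)) - ((1 + p) / (1 - p))²` has the sign of `p a²`.
-/

lemma fdist_strictMonoOn : StrictMonoOn fdist (Ioo (-1) 1) := by
  rintro x ⟨hx₁, hx₂⟩ y ⟨hy₁, hy₂⟩ hxy
  have hx : 0 < 1 - x := by linarith
  have hy : 0 < 1 - y := by linarith
  apply Real.log_lt_log (div_pos (by linarith) hx)
  rw [div_lt_div_iff₀ hx hy]
  nlinarith

lemma fdist_pos {p : ℝ} (hp₀ : 0 < p) (hp₁ : p < 1) : 0 < fdist p :=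
  Real.log_pos <| (one_lt_div (by linarith)).2 (by linarith)

lemma fdist_two_mul_div_one_add_sq (p : ℝ) : fdist (2 * p / (1 + p ^ 2)) = 2 * fdist p := by
  have hq : (1 + 2 * p / (1 + p ^ 2)) / (1 - 2 * p / (1 + p ^ 2)) = ((1 + p) / (1 - p)) ^ 2 := by
    have h : (1 + p ^ 2) ≠ 0 := by positivity
    rw [div_pow]
    field_simp
    ring
  rw [fdist, fdist, hq, Real.log_pow]
  norm_num

lemma two_mul_fdist_lt_fdist_sub_add_fdist_add {p a : ℝ} (hp : 0 < p) (ha : 0 < a)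
    (hr : p + a < 1) :
    2 * fdist p < fdist (p - a) + fdist (p + a) := by
  have hA : 0 < 1 + (p - a) := by linarith
  have hB : 0 < 1 - (p - a) := by linarith
  have hC : 0 < 1 + (p + a) := by linarith
  have hD : 0 < 1 - (p + a) := by linarith
  have hp₁ : 0 < 1 - p := by linarith
  rw [fdist, fdist, fdist, ← Real.log_mul (by positivity) (by positivity), two_mul,
    ← Real.log_mul (by positivity) (by positivity)]
  apply Real.log_lt_log (by positivity)
  rw [div_mul_div_comm, div_mul_div_comm, div_lt_div_iff₀ (by positivity) (by positivity)]
  nlinarith [mul_pos hp (mul_pos ha ha)]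

lemma hdist1_sub_lt_hdist1_add {p a : ℝ} (hp : 0 < p) (ha : 0 < a) (hr : p + a < 1) :
    hdist1 p (p - a) < hdist1 p (p + a) := by
  have hmono : fdist (p - a) < fdist p :=
    fdist_strictMonoOn ⟨by linarith, by linarith⟩ ⟨by linarith, by linarith⟩ (by linarith)
  have hconv := two_mul_fdist_lt_fdist_sub_add_fdist_add hp ha hr
  rw [hdist1, hdist1, abs_of_pos (by linarith), abs_of_neg (by linarith)]
  linarith

section Barycenter

variable {ε : ℝ} (hε : ε ∈ Ioo (0 : ℝ) 1)
include hε

lemma barycenter_mem_Ioo : (1 - Real.sqrt ((2 - ε) * ε)) / (1 - ε) ∈ Ioo (0 : ℝ) 1 := by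
  obtain ⟨hε₀, hε₁⟩ := hε
  have hs : Real.sqrt ((2 - ε) * ε) ^ 2 = (2 - ε) * ε := Real.sq_sqrt (by nlinarith)
  have hs₀ := Real.sqrt_nonneg ((2 - ε) * ε)
  constructor
  · exact div_pos (by nlinarith) (by linarith)
  · rw [div_lt_one (by linarith)]
    nlinarith

lemma two_mul_barycenter_div_one_add_sq :
    2 * ((1 - Real.sqrt ((2 - ε) * ε)) / (1 - ε)) /
      (1 + ((1 - Real.sqrt ((2 - ε) * ε)) / (1 - ε)) ^ 2) = 1 - ε := by
  obtain ⟨hε₀, hε₁⟩ := hε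
  generalize hs' : Real.sqrt ((2 - ε) * ε) = s
  have hs : s ^ 2 = (2 - ε) * ε := hs' ▸ Real.sq_sqrt (by nlinarith)
  have h : 1 - ε ≠ 0 := by linarith
  rw [div_eq_iff (by positivity)]
  field_simp
  linear_combination -hs

end Barycenter

theorem natural_gradient_bias_general (ε : ℝ) (hε : ε ∈ Ioo (0 : ℝ) 1)
    (p : ℝ) (hp : p = (1 - Real.sqrt ((2 - ε) * ε)) / (1 - ε))
    (η : ℝ) (hη : 0 < η)
    (a b Rl Rr : ℝ)
    (ha : a = η * (Real.sqrt (1 - p ^ 2) / 2) * fdist p)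
    (hb : b = η * (Real.sqrt (1 - p ^ 2) / 2) * fdist (1 - ε))
    (hRl : Rl = p - a) (hRr : Rr = p - a + b)
    (hRr' : Rr ∈ Ioo (-1 : ℝ) 1) :
    hdist1 p Rl < hdist1 p Rr := by
  obtain ⟨hp₀, hp₁⟩ : p ∈ Ioo (0 : ℝ) 1 := hp ▸ barycenter_mem_Ioo hε
  have hfar : fdist (1 - ε) = 2 * fdist p := by
    rw [← two_mul_barycenter_div_one_add_sq hε, ← hp, fdist_two_mul_div_one_add_sq]
  have ha₀ : 0 < a := by
    have hsqrt : 0 < Real.sqrt (1 - p ^ 2) := Real.sqrt_pos.2 (by nlinarith)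
    have hfp := fdist_pos hp₀ hp₁
    rw [ha]
    positivity
  have hRr_eq : Rr = p + a := by rw [hRr, hb, hfar, ha]; ring
  subst hRl hRr_eq
  exact hdist1_sub_lt_hdist1_add hp₀ ha₀ hRr'.2

theorem natural_gradient_bias (ε : ℝ) (hε : ε ∈ Ioo (0 : ℝ) 1)
    (p : ℝ) (hp : p = (1 - Real.sqrt ((2 - ε) * ε)) / (1 - ε))
    (η : ℝ) (hη : 0 < η)
    (a b Rl Rr : ℝ)
    (ha : a = η * (Real.sqrt (1 - p ^ 2) / 2) * fdist p)
    (hb : b = η * (Real.sqrt (1 - p ^ 2) / 2) * fdist (1 - ε))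
    (hRl : Rl = p - a) (hRr : Rr = p - a + b)
    (hRl' : Rl ∈ Ioo (-1 : ℝ) 1) (hRr' : Rr ∈ Ioo (-1 : ℝ) 1) :
    hdist1 p Rl < hdist1 p Rr :=
  natural_gradient_bias_general ε hε p hp η hη a b Rl Rr ha hb hRl hRr hRr'
end

section
/- Let the Poincaré disk have radius r, let x be a point with |x| < r, and let g be a vector not parallel to x. Let P = r·g/|g|, N = −P. Define I₊ as the second intersection of line through N and x with the circle |·| = r, I₋ as the second intersection of line through P and x with that circle, and A the intersection of lines PI₊ and NI₋. Then x is the orthocenter of triangle ANP, and the circle with diameter xA passes through I₊ and I₋ and is orthogonal to the boundary circle |·| = r. -/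
open Set
open scoped RealInnerProductSpace

private lemma circ_aux {V : Type*} [NormedAddCommGroup V] [InnerProductSpace ℝ V]
    (x A Y : V) (h : ⟪Y - x, Y - A⟫ = 0) :
    ‖Y - (1 / 2 : ℝ) • (x + A)‖ = ‖A - x‖ / 2 := by
  have h1 : Y - (1 / 2 : ℝ) • (x + A) = (1 / 2 : ℝ) • ((Y - x) + (Y - A)) := by
    rw [smul_add]; module
  have h2 : A - x = (Y - x) - (Y - A) := by abel
  have h3 : ‖(Y - x) + (Y - A)‖ = ‖(Y - x) - (Y - A)‖ := by
    have e1 := norm_add_sq_real (Y - x) (Y - A)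
    have e2 := norm_sub_sq_real (Y - x) (Y - A)
    have : ‖(Y - x) + (Y - A)‖ ^ 2 = ‖(Y - x) - (Y - A)‖ ^ 2 := by
      rw [e1, e2, h]; ring
    have h5 := congrArg Real.sqrt this
    rwa [Real.sqrt_sq (norm_nonneg _), Real.sqrt_sq (norm_nonneg _)] at h5
  rw [h1, norm_smul, h2, ← h3, Real.norm_eq_abs, abs_of_pos (by norm_num : (0:ℝ) < 1/2)]
  ring

theorem geodesic_circle_construction (r : ℝ) (hr : 0 < r)
    (x g : EuclideanSpace ℝ (Fin 2)) (hx : ‖x‖ < r) (hg : g ≠ 0)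
    (hind : LinearIndependent ℝ ![x, g])
    (P N Ip Im A : EuclideanSpace ℝ (Fin 2))
    (hP : P = (r / ‖g‖) • g) (hN : N = -P)
    (hIp : ‖Ip‖ = r ∧ Ip ≠ N ∧ ∃ t : ℝ, Ip = N + t • (x - N))
    (hIm : ‖Im‖ = r ∧ Im ≠ P ∧ ∃ t : ℝ, Im = P + t • (x - P))
    (hA : (∃ s : ℝ, A = P + s • (Ip - P)) ∧ ∃ u : ℝ, A = N + u • (Im - N)) :
    -- x is the orthocenter of triangle A N P
    (⟪x - A, N - P⟫ = 0 ∧ ⟪x - N, A - P⟫ = 0 ∧ ⟪x - P, A - N⟫ = 0) ∧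
    -- the circle with diameter xA passes through Ip and Im
    (‖Ip - (1 / 2 : ℝ) • (x + A)‖ = ‖A - x‖ / 2 ∧
      ‖Im - (1 / 2 : ℝ) • (x + A)‖ = ‖A - x‖ / 2) ∧
    -- and it is orthogonal to the boundary circle of radius r
    ‖(1 / 2 : ℝ) • (x + A)‖ ^ 2 = r ^ 2 + (‖A - x‖ / 2) ^ 2 := by
  obtain ⟨hIpn, hIpN, t, ht⟩ := hIp
  obtain ⟨hImn, hImP, w, hw⟩ := hIm
  obtain ⟨⟨s, hs⟩, ⟨u, hu⟩⟩ := hA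
  subst hN
  have hPn : ‖P‖ = r := by
    rw [hP, norm_smul, Real.norm_eq_abs, abs_of_pos (div_pos hr (norm_pos_iff.2 hg))]
    exact div_mul_cancel₀ r (norm_ne_zero_iff.2 hg)
  -- key orthogonality (Thales)
  have key1 : ⟪Ip - -P, Ip - P⟫ = 0 := by
    have : Ip - -P = Ip + P := by abel
    rw [this, inner_add_left, inner_sub_right, inner_sub_right,
      real_inner_self_eq_norm_sq, real_inner_self_eq_norm_sq, real_inner_comm]
    rw [hIpn, hPn]; ring
  have key2 : ⟪Im - P, Im - -P⟫ = 0 := by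
    have : Im - -P = Im + P := by abel
    rw [this, inner_add_right, inner_sub_left, inner_sub_left,
      real_inner_self_eq_norm_sq, real_inner_self_eq_norm_sq, real_inner_comm]
    rw [hImn, hPn]; ring
  -- t, w nonzero
  have ht0 : t ≠ 0 := by
    rintro rfl; apply hIpN; rw [ht]; simp
  have hw0 : w ≠ 0 := by
    rintro rfl; apply hImP; rw [hw]; simp
  have hxN : x - -P = t⁻¹ • (Ip - -P) := by
    have : Ip - -P = t • (x - -P) := by rw [ht]; abel
    rw [this, smul_smul, inv_mul_cancel₀ ht0, one_smul]
  have hxP : x - P = w⁻¹ • (Im - P) := by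
    have : Im - P = w • (x - P) := by rw [hw]; abel
    rw [this, smul_smul, inv_mul_cancel₀ hw0, one_smul]
  have hAP : A - P = s • (Ip - P) := by rw [hs]; abel
  have hAN : A - -P = u • (Im - -P) := by rw [hu]; abel
  have orth2 : ⟪x - -P, A - P⟫ = 0 := by
    rw [hxN, hAP, real_inner_smul_left, real_inner_smul_right, key1]; ring
  have orth3 : ⟪x - P, A - -P⟫ = 0 := by
    rw [hxP, hAN, real_inner_smul_left, real_inner_smul_right, key2]; ring
  have hPP : ⟪P, P⟫ = r ^ 2 := by rw [real_inner_self_eq_norm_sq, hPn]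
  have orth2' := orth2
  have orth3' := orth3
  simp only [inner_sub_left, inner_sub_right, inner_neg_left, inner_neg_right] at orth2' orth3'
  have hxA : ⟪x, A⟫ = r ^ 2 := by
    have c1 := real_inner_comm x P
    have c2 := real_inner_comm x A
    have c3 := real_inner_comm P A
    linarith
  have orth1 : ⟪x - A, -P - P⟫ = 0 := by
    simp only [inner_sub_left, inner_sub_right, inner_neg_left, inner_neg_right]
    have c1 := real_inner_comm x P
    have c2 := real_inner_comm A P
    linarith
  refine ⟨⟨orth1, orth2, orth3⟩, ⟨?_, ?_⟩, ?_⟩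
  · apply circ_aux
    have e1 : Ip - x = (1 - t⁻¹) • (Ip - -P) := by
      rw [sub_smul, one_smul, ← hxN]; abel
    have e2 : Ip - A = (1 - s) • (Ip - P) := by
      rw [sub_smul, one_smul, ← hAP]; abel
    rw [e1, e2, real_inner_smul_left, real_inner_smul_right, key1]; ring
  · apply circ_aux
    have e1 : Im - x = (1 - w⁻¹) • (Im - P) := by
      rw [sub_smul, one_smul, ← hxP]; abel
    have e2 : Im - A = (1 - u) • (Im - -P) := by
      rw [sub_smul, one_smul, ← hAN]; abel
    rw [e1, e2, real_inner_smul_left, real_inner_smul_right, key2]; ring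
  · have e1 := norm_add_sq_real x A
    have e2 := norm_sub_sq_real A x
    rw [norm_smul, Real.norm_eq_abs, abs_of_pos (by norm_num : (0:ℝ) < 1/2)]
    linear_combination e1/4 - e2/4 + hxA - 1/2 * (real_inner_comm A x)
end
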